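/- For every T > 0 there exists a constant C_T ∈ (0, ∞) such that for all t with 0 < t ≤ T and all x, y ∈ [0,1], the Neumann heat kernel satisfies G^N_t(x,y) ≤ C_T · p_t(x − y), i.e. 1 + 2·∑_{k=1}^∞ e^{−k²π²t}·cos(kπx)·cos(kπy) ≤ C_T · (4πt)^{−1/2}·exp(−(x−y)²/(4t)). -/

import Mathlib

open Real MeasureTheory

/-- The standard one-dimensional heat kernel `p_t(x) = (4πt)^{-1/2} exp(-x²/(4t))`. -/
noncomputable def heatKernel (t x : ℝ) : ℝ :=
  (4 * π * t) ^ (-(1/2) : ℝ) * Real.exp (-x ^ 2 / (4 * t))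

/-- The Neumann heat kernel on `[0,1]`:
`G^N_t(x,y) = 1 + 2 ∑_{k=1}^∞ e^{-k²π²t} cos(kπx) cos(kπy)`. -/
noncomputable def GN (t x y : ℝ) : ℝ :=
  1 + 2 * ∑' k : ℕ, Real.exp (-((k + 1 : ℝ) ^ 2 * π ^ 2 * t)) *
      Real.cos ((k + 1 : ℝ) * π * x) * Real.cos ((k + 1 : ℝ) * π * y)

private lemma jacobi_term_eq (t u : ℝ) (n : ℤ) :
    jacobiTheta₂_term n (u/2 : ℂ) (π*t*Complex.I)
      = Complex.exp (-π * ((π*t : ℝ) : ℂ) * n^2 + 2*π*(Complex.I*u/2)*n) := by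
  rw [jacobiTheta₂_term]; congr 1; push_cast; ring_nf; rw [Complex.I_sq]; ring

private lemma summable_cterm (t : ℝ) (ht : 0 < t) (u : ℝ) :
    Summable (fun n : ℤ ↦ Complex.exp (-π * ((π*t : ℝ) : ℂ) * n^2 + 2*π*(Complex.I*u/2)*n)) := by
  have := (summable_jacobiTheta₂_term_iff (u/2 : ℂ) (π*t*Complex.I)).mpr
    (by simp [Complex.mul_I_im, pi_pos.le, ht, pi_pos, mul_pos pi_pos ht])
  simpa [jacobi_term_eq t u] using this

/-- The theta relation coming from Poisson summation. -/
private lemma theta_key (t : ℝ) (ht : 0 < t) (u : ℝ) :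
    ∑' n : ℤ, Real.exp (-((n:ℝ)^2 * π^2 * t)) * Real.cos ((n:ℝ) * π * u)
      = (π*t) ^ (-(1/2) : ℝ) * ∑' n : ℤ, Real.exp (-(u - 2*n)^2 / (4*t)) := by
  have hπt : (0:ℝ) < π * t := mul_pos pi_pos ht
  have key := Complex.tsum_exp_neg_quadratic (a := ((π*t : ℝ) : ℂ))
    (by simpa using hπt) (Complex.I*u/2)
  have h1 : ∀ n : ℤ, Complex.exp (-π / ((π*t : ℝ) : ℂ) * (n + Complex.I * (Complex.I*u/2)) ^ 2)
      = ((Real.exp (-(u - 2*n)^2 / (4*t)) : ℝ) : ℂ) := by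
    intro n
    rw [Complex.ofReal_exp]
    congr 1
    have hπ : ((π : ℝ):ℂ) ≠ 0 := by exact_mod_cast pi_ne_zero
    have htc : ((t : ℝ):ℂ) ≠ 0 := by exact_mod_cast ht.ne'
    push_cast
    field_simp
    ring_nf
    rw [Complex.I_sq, show (Complex.I:ℂ)^4 = 1 by
      rw [show (4:ℕ)=2*2 from rfl, pow_mul, Complex.I_sq]; ring]
    ring
  have h12 : ((1/2:ℝ):ℂ) = (1/2:ℂ) := by norm_num
  have h2 : ((π*t : ℝ) : ℂ) ^ (1/2:ℂ) = (((π*t)^((1/2):ℝ) : ℝ) : ℂ) := by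
    rw [Complex.ofReal_cpow hπt.le, h12]
  have h3 : (π*t) ^ (-(1/2):ℝ) = 1 / (π*t)^((1/2):ℝ) := by
    rw [Real.rpow_neg hπt.le]; exact (one_div _).symm
  have hR : (1 / ((π*t : ℝ) : ℂ) ^ (1/2 : ℂ) *
      ∑' n : ℤ, Complex.exp (-π / ((π*t : ℝ) : ℂ) * (n + Complex.I * (Complex.I*u/2)) ^ 2))
      = (((π*t) ^ (-(1/2) : ℝ) * ∑' n : ℤ, Real.exp (-(u - 2*n)^2 / (4*t)) : ℝ) : ℂ) := by
    rw [tsum_congr h1, ← Complex.ofReal_tsum, h2, h3]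
    push_cast
    ring
  rw [hR] at key
  have hsum := summable_cterm t ht u
  have hre := congrArg Complex.re key
  rw [Complex.ofReal_re] at hre
  rw [← hre, Complex.re_tsum hsum]
  apply tsum_congr
  intro n
  have hz : (-↑π * ((π*t:ℝ):ℂ) * (n:ℂ)^2 + 2*↑π*(Complex.I*↑u/2)*↑n)
      = Complex.ofReal (-((n:ℝ)^2*π^2*t)) + Complex.ofReal ((n:ℝ)*π*u) * Complex.I := by
    push_cast; ring
  rw [hz, Complex.exp_add, ← Complex.ofReal_exp, Complex.re_ofReal_mul,
    Complex.exp_ofReal_mul_I_re]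

private lemma summable_f (t : ℝ) (ht : 0 < t) (u : ℝ) :
    Summable (fun n : ℤ ↦ Real.exp (-((n:ℝ)^2 * π^2 * t)) * Real.cos ((n:ℝ) * π * u)) := by
  apply Summable.of_norm_bounded (summable_norm_iff.mpr (summable_cterm t ht u))
  intro n
  rw [← jacobi_term_eq, norm_jacobiTheta₂_term]
  have h1 : -π * (n:ℝ)^2 * ((π:ℂ)*t*Complex.I).im - 2*π*(n:ℝ)*((u:ℂ)/2).im
      = -((n:ℝ)^2 * π^2 * t) := by
    simp [Complex.mul_I_im]
    ring
  rw [h1, Real.norm_eq_abs, abs_mul, abs_of_pos (Real.exp_pos _)]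
  calc Real.exp (-((n:ℝ)^2*π^2*t)) * |Real.cos ((n:ℝ)*π*u)|
      ≤ Real.exp (-((n:ℝ)^2*π^2*t)) * 1 :=
        mul_le_mul_of_nonneg_left (Real.abs_cos_le_one _) (Real.exp_pos _).le
    _ = Real.exp (-((n:ℝ)^2*π^2*t)) := mul_one _

private lemma summable_fnat (t : ℝ) (ht : 0 < t) (u : ℝ) :
    Summable (fun k : ℕ ↦ Real.exp (-((k+1:ℝ)^2 * π^2 * t)) * Real.cos ((k+1:ℝ) * π * u)) := by
  have hinj : Function.Injective (fun k : ℕ ↦ (k+1 : ℤ)) := by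
    intro a b h; simpa using h
  have h := (summable_f t ht u).comp_injective hinj
  refine h.congr fun k ↦ ?_
  simp only [Function.comp]
  push_cast
  ring_nf

/-- The integer theta sum equals `1 + 2 ×` the natural-number sum. -/
private lemma theta_int_eq (t : ℝ) (ht : 0 < t) (u : ℝ) :
    ∑' n : ℤ, Real.exp (-((n:ℝ)^2 * π^2 * t)) * Real.cos ((n:ℝ) * π * u)
      = 1 + 2 * ∑' k : ℕ, Real.exp (-((k+1:ℝ)^2 * π^2 * t)) * Real.cos ((k+1:ℝ) * π * u) := by
  set f : ℤ → ℝ := fun n ↦ Real.exp (-((n:ℝ)^2 * π^2 * t)) * Real.cos ((n:ℝ) * π * u) with hf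
  have hs : Summable f := summable_f t ht u
  have heven : ∀ n : ℤ, f (-n) = f n := by
    intro n
    simp only [hf]
    push_cast
    rw [show (-(n:ℝ))*π*u = -((n:ℝ)*π*u) by ring, Real.cos_neg,
      show (-(n:ℝ))^2 = (n:ℝ)^2 by ring]
  have hnat : Summable (fun n : ℕ ↦ f n) := hs.comp_injective Nat.cast_injective
  have hinj : Function.Injective (fun k : ℕ ↦ ((k:ℤ)+1)) := by
    intro a b h; simpa using h
  have hnat1 : Summable (fun n : ℕ ↦ f ((n:ℤ)+1)) := hs.comp_injective hinj
  have h2 : ∀ n : ℕ, f (-((n:ℤ)+1)) = f ((n:ℤ)+1) := fun n ↦ heven ((n:ℤ)+1)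
  have hnat2 : Summable (fun n : ℕ ↦ f (-((n:ℤ)+1))) := by
    refine hnat1.congr fun n ↦ ?_
    exact (h2 n).symm
  have h1 : ∑' n : ℤ, f n = ∑' n : ℕ, (f n + f (-((n:ℤ)+1))) :=
    (tsum_nat_add_neg_add_one hs).symm
  have h3 : ∑' n : ℕ, (f n + f (-((n:ℤ)+1))) = ∑' n : ℕ, f n + ∑' n : ℕ, f ((n:ℤ)+1) := by
    rw [Summable.tsum_add hnat hnat2]
    congr 1
    exact tsum_congr h2
  have h4 : ∑' n : ℕ, f n = f 0 + ∑' n : ℕ, f ((n:ℤ)+1) := by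
    have := Summable.tsum_eq_zero_add hnat
    simpa using this
  have hf0 : f 0 = 1 := by simp [hf]
  have h5 : ∑' n : ℕ, f ((n:ℤ)+1)
      = ∑' k : ℕ, Real.exp (-((k+1:ℝ)^2 * π^2 * t)) * Real.cos ((k+1:ℝ) * π * u) := by
    apply tsum_congr; intro k; simp only [hf]; push_cast; ring_nf
  rw [h1, h3, h4, hf0, h5]
  ring

/-- `GN` as a half-sum of two theta values. -/
private lemma GN_eq (t x y : ℝ) (ht : 0 < t) :
    GN t x y = ((π*t) ^ (-(1/2) : ℝ) * ∑' n : ℤ, Real.exp (-((x-y) - 2*n)^2 / (4*t))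
      + (π*t) ^ (-(1/2) : ℝ) * ∑' n : ℤ, Real.exp (-((x+y) - 2*n)^2 / (4*t))) / 2 := by
  rw [← theta_key t ht (x-y), ← theta_key t ht (x+y), theta_int_eq t ht (x-y),
    theta_int_eq t ht (x+y), GN]
  have hsplit : ∀ k : ℕ, Real.exp (-((k + 1 : ℝ) ^ 2 * π ^ 2 * t)) *
      Real.cos ((k + 1 : ℝ) * π * x) * Real.cos ((k + 1 : ℝ) * π * y)
      = (1/2) * (Real.exp (-((k+1:ℝ)^2 * π^2 * t)) * Real.cos ((k+1:ℝ) * π * (x-y)))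
        + (1/2) * (Real.exp (-((k+1:ℝ)^2 * π^2 * t)) * Real.cos ((k+1:ℝ) * π * (x+y))) := by
    intro k
    have := Real.two_mul_cos_mul_cos ((k + 1 : ℝ) * π * x) ((k + 1 : ℝ) * π * y)
    have h1 : (k + 1 : ℝ) * π * x - (k + 1 : ℝ) * π * y = (k+1:ℝ) * π * (x-y) := by ring
    have h2 : (k + 1 : ℝ) * π * x + (k + 1 : ℝ) * π * y = (k+1:ℝ) * π * (x+y) := by ring
    rw [h1, h2] at this
    have hcc : Real.cos ((k + 1 : ℝ) * π * x) * Real.cos ((k + 1 : ℝ) * π * y)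
        = (Real.cos ((k+1:ℝ) * π * (x-y)) + Real.cos ((k+1:ℝ) * π * (x+y)))/2 := by
      linarith
    rw [mul_assoc, hcc]
    ring
  rw [tsum_congr hsplit, Summable.tsum_add
    ((summable_fnat t ht (x-y)).mul_left _) ((summable_fnat t ht (x+y)).mul_left _),
    tsum_mul_left, tsum_mul_left]
  ring

private lemma summable_maj (T : ℝ) (hT : 0 < T) :
    Summable (fun n : ℤ ↦ Real.exp (-(|(n:ℝ)|-1)^2 / T)) := by
  have h := (summable_pow_mul_jacobiTheta₂_term_bound (1/(π*T))
    (T := 1/(π*T)) (by positivity) 0).mul_left (Real.exp (-(1/T)))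
  refine h.congr fun n ↦ ?_
  simp only [pow_zero, one_mul]
  rw [← Real.exp_add]
  congr 1
  have hπ : (π:ℝ) ≠ 0 := pi_ne_zero
  have hT0 : T ≠ 0 := hT.ne'
  have habs : (|(n:ℝ)|-1)^2 = (n:ℝ)^2 - 2*|(n:ℝ)| + 1 := by
    rw [sub_sq, sq_abs]; ring
  rw [habs]
  field_simp
  push_cast
  ring

private lemma gauss_sum_le (T t d u : ℝ) (hT : 0 < T) (ht : 0 < t) (htT : t ≤ T)
    (h0 : ∀ n : ℤ, d^2 ≤ (u - 2*n)^2)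
    (h1 : ∀ n : ℤ, 4*(|(n:ℝ)| - 1)^2 - 4 ≤ (u - 2*n)^2 - d^2) :
    ∑' n : ℤ, Real.exp (-(u - 2*n)^2/(4*t)) ≤
      (Real.exp (1/T) * ∑' n : ℤ, Real.exp (-(|(n:ℝ)|-1)^2 / T)) * Real.exp (-d^2/(4*t)) := by
  have hmaj := summable_maj T hT
  have hb : ∀ n : ℤ, Real.exp (-(u - 2*n)^2/(4*t)) ≤
      (Real.exp (1/T) * Real.exp (-d^2/(4*t))) * Real.exp (-(|(n:ℝ)|-1)^2 / T) := by
    intro n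
    have he0 : 0 ≤ (u - 2*n)^2 - d^2 := by linarith [h0 n]
    have hstep1 : -((u - 2*n)^2 - d^2)/(4*t) ≤ -((u - 2*n)^2 - d^2)/(4*T) := by
      rw [neg_div, neg_div, neg_le_neg_iff]
      apply div_le_div_of_nonneg_left he0 (by linarith) (by linarith)
    have hstep2 : -((u - 2*n)^2 - d^2)/(4*T) ≤ (4 - 4*(|(n:ℝ)| - 1)^2)/(4*T) := by
      apply div_le_div_of_nonneg_right ?_ (by linarith)
      linarith [h1 n]
    have hexp : Real.exp (-(u - 2*n)^2/(4*t))
        = Real.exp (-d^2/(4*t)) * Real.exp (-((u - 2*n)^2 - d^2)/(4*t)) := by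
      rw [← Real.exp_add]; congr 1; field_simp; ring
    have heq2 : (4 - 4*(|(n:ℝ)| - 1)^2)/(4*T) = 1/T + (-(|(n:ℝ)|-1)^2 / T) := by
      field_simp; ring
    calc Real.exp (-(u - 2*n)^2/(4*t))
        = Real.exp (-d^2/(4*t)) * Real.exp (-((u - 2*n)^2 - d^2)/(4*t)) := hexp
      _ ≤ Real.exp (-d^2/(4*t)) * Real.exp (1/T + (-(|(n:ℝ)|-1)^2 / T)) := by
          gcongr
          rw [← heq2]; exact hstep1.trans hstep2
      _ = (Real.exp (1/T) * Real.exp (-d^2/(4*t))) * Real.exp (-(|(n:ℝ)|-1)^2 / T) := by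
          rw [Real.exp_add]; ring
  have hmaj' := hmaj.mul_left (Real.exp (1/T) * Real.exp (-d^2/(4*t)))
  have hls : Summable (fun n : ℤ ↦ Real.exp (-(u - 2*n)^2/(4*t))) :=
    Summable.of_nonneg_of_le (fun n ↦ (Real.exp_pos _).le) hb hmaj'
  calc ∑' n : ℤ, Real.exp (-(u - 2*n)^2/(4*t))
      ≤ ∑' n : ℤ, (Real.exp (1/T) * Real.exp (-d^2/(4*t))) * Real.exp (-(|(n:ℝ)|-1)^2 / T) :=
        Summable.tsum_le_tsum hb hls hmaj'
    _ = (Real.exp (1/T) * ∑' n : ℤ, Real.exp (-(|(n:ℝ)|-1)^2 / T)) * Real.exp (-d^2/(4*t)) := by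
        rw [tsum_mul_left]; ring

theorem neumann_kernel_gaussian_upper_bound (T : ℝ) (hT : 0 < T) :
    ∃ C : ℝ, 0 < C ∧ ∀ t x y : ℝ, 0 < t → t ≤ T →
      x ∈ Set.Icc (0 : ℝ) 1 → y ∈ Set.Icc (0 : ℝ) 1 →
      GN t x y ≤ C * heatKernel t (x - y) := by
  set Sig0 : ℝ := ∑' n : ℤ, Real.exp (-(|(n:ℝ)|-1)^2 / T) with hSig0
  have hSigpos : 0 < Sig0 :=
    Summable.tsum_pos (summable_maj T hT) (fun n ↦ (Real.exp_pos _).le) 0 (Real.exp_pos _)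
  refine ⟨2 * Real.exp (1/T) * Sig0, by positivity, ?_⟩
  intro t x y ht htT hx hy
  obtain ⟨hx0, hx1⟩ := hx
  obtain ⟨hy0, hy1⟩ := hy
  set d := x - y with hd
  set s := x + y with hs
  have hd1 : |d| ≤ 1 := by rw [abs_le]; constructor <;> simp only [hd] <;> linarith
  -- hypotheses for the d-sum
  have h0d : ∀ n : ℤ, d^2 ≤ (d - 2*n)^2 := by
    intro n
    rcases lt_trichotomy n 0 with hn | hn | hn
    · have hle : n ≤ -1 := by omega
      have h' : (n:ℝ) ≤ -1 := by
        calc (n:ℝ) ≤ ((-1:ℤ):ℝ) := by exact_mod_cast hle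
          _ = -1 := by norm_num
      nlinarith [abs_le.mp hd1]
    · simp [hn]
    · have h' : (1:ℝ) ≤ (n:ℝ) := by exact_mod_cast hn
      nlinarith [abs_le.mp hd1]
  have h1d : ∀ n : ℤ, 4*(|(n:ℝ)| - 1)^2 - 4 ≤ (d - 2*n)^2 - d^2 := by
    intro n
    rcases le_or_gt 0 (n:ℝ) with hn | hn
    · rw [abs_of_nonneg hn]
      nlinarith [abs_le.mp hd1]
    · rw [abs_of_neg hn]
      nlinarith [abs_le.mp hd1]
  -- hypotheses for the s-sum
  have h0s : ∀ n : ℤ, d^2 ≤ (s - 2*n)^2 := by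
    intro n
    rcases le_or_gt n 0 with hn | hn
    · have hn' : (n:ℝ) ≤ 0 := by exact_mod_cast hn
      nlinarith [mul_nonneg hx0 hy0]
    · have hn' : (1:ℝ) ≤ (n:ℝ) := by exact_mod_cast hn
      nlinarith [mul_nonneg (by linarith : (0:ℝ) ≤ 1-x) (by linarith : (0:ℝ) ≤ 1-y)]
  have h1s : ∀ n : ℤ, 4*(|(n:ℝ)| - 1)^2 - 4 ≤ (s - 2*n)^2 - d^2 := by
    intro n
    rcases le_or_gt 0 (n:ℝ) with hn | hn
    · rw [abs_of_nonneg hn]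
      rcases le_or_gt (n:ℝ) 0 with hn2 | hn2
      · have : (n:ℝ) = 0 := le_antisymm hn2 hn
        rw [this]
        nlinarith [mul_nonneg hx0 hy0]
      · have hn' : (1:ℝ) ≤ (n:ℝ) := by
          have : 0 < n := by exact_mod_cast hn2
          exact_mod_cast this
        nlinarith [mul_nonneg hx0 hy0]
    · rw [abs_of_neg hn]
      have hn' : (n:ℝ) ≤ -1 := by
        have hlt : n < 0 := by exact_mod_cast hn
        have hle : n ≤ -1 := by omega
        calc (n:ℝ) ≤ ((-1:ℤ):ℝ) := by exact_mod_cast hle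
          _ = -1 := by norm_num
      nlinarith [mul_nonneg hx0 hy0]
  have hGN := GN_eq t x y ht
  rw [← hd, ← hs] at hGN
  have hbd := gauss_sum_le T t d d hT ht htT h0d h1d
  have hbs := gauss_sum_le T t d s hT ht htT h0s h1s
  have hπt : (0:ℝ) < π * t := mul_pos pi_pos ht
  have hrpow : (π*t) ^ (-(1/2) : ℝ) / 2 = (4 * π * t) ^ (-(1/2) : ℝ) := by
    have h4 : (4 * π * t : ℝ) = 4 * (π * t) := by ring
    rw [h4, Real.mul_rpow (by norm_num) hπt.le]
    have : (4:ℝ) ^ (-(1/2) : ℝ) = 1/2 := by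
      rw [show (4:ℝ) = 2^(2:ℕ) by norm_num, ← Real.rpow_natCast 2 2, ← Real.rpow_mul (by norm_num)]
      norm_num
    rw [this]; ring
  have hker : heatKernel t d = (4 * π * t) ^ (-(1/2) : ℝ) * Real.exp (-d^2/(4*t)) := rfl
  rw [hGN, hker]
  have hpos : (0:ℝ) < (π*t) ^ (-(1/2) : ℝ) := Real.rpow_pos_of_pos hπt _
  calc ((π*t) ^ (-(1/2) : ℝ) * ∑' n : ℤ, Real.exp (-(d - 2*n)^2 / (4*t))
        + (π*t) ^ (-(1/2) : ℝ) * ∑' n : ℤ, Real.exp (-(s - 2*n)^2 / (4*t))) / 2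
      ≤ ((π*t) ^ (-(1/2) : ℝ) * ((Real.exp (1/T) * Sig0) * Real.exp (-d^2/(4*t)))
        + (π*t) ^ (-(1/2) : ℝ) * ((Real.exp (1/T) * Sig0) * Real.exp (-d^2/(4*t)))) / 2 := by
        gcongr
    _ = 2 * Real.exp (1/T) * Sig0 * ((π*t) ^ (-(1/2) : ℝ) / 2 * Real.exp (-d^2/(4*t))) := by
        ring
    _ = 2 * Real.exp (1/T) * Sig0 * ((4 * π * t) ^ (-(1/2) : ℝ) * Real.exp (-d^2/(4*t))) := by
        rw [hrpow]
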